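/- For all positive integers s_x, s_y and all δ > 0 there exists a constant M (depending only on s_x, s_y, δ) with the following property: for every probability measure P on ℝ^{s_x} × ℝ^{s_y} supported in [−1,1]^{s_x} × [−1,1]^{s_y} whose covariance matrices Σ_X and Σ_Y have smallest eigenvalues at least δ and whose cross-covariance Σ_XY is nonzero, and for every (x, y) ∈ [−1,1]^{s_x} × [−1,1]^{s_y}, the canonical gradient of the root-Pillai trace satisfies | (2‖Λ_XY‖_F)^{-1} [ −(x−μ_X)ᵀ Σ_X^{-1} Σ_XY Σ_Y^{-1} Σ_YX Σ_X^{-1} (x−μ_X) − (y−μ_Y)ᵀ Σ_Y^{-1} Σ_YX Σ_X^{-1} Σ_XY Σ_Y^{-1} (y−μ_Y) + 2 (y−μ_Y)ᵀ Σ_Y^{-1} Σ_YX Σ_X^{-1} (x−μ_X) ] | ≤ M, where Λ_XY = Σ_X^{-1/2} Σ_XY Σ_Y^{-1/2}. -/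

import Mathlib

open Matrix MeasureTheory

noncomputable section

/-- Squared Frobenius norm of a real matrix: `‖M‖_F² = tr (M Mᵀ)`. -/
def frobSq {m n : Type*} [Fintype m] [Fintype n] (M : Matrix m n ℝ) : ℝ :=
  Matrix.trace (M * Mᵀ)

/-- Frobenius norm of a real matrix. -/
def frobNorm {m n : Type*} [Fintype m] [Fintype n] (M : Matrix m n ℝ) : ℝ :=
  Real.sqrt (frobSq M)

open Classical in
/-- `A^{-1/2}`: the inverse of the unique positive definite square root of a positive
definite matrix `A` (junk value `0` if `A` is not positive definite). -/
def invSqrt {n : Type*} [Fintype n] [DecidableEq n] (A : Matrix n n ℝ) : Matrix n n ℝ :=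
  if h : A.PosDef then
    ((h.posSemidef.isHermitian.eigenvectorUnitary : Matrix n n ℝ) *
      diagonal ((↑) ∘ (√·) ∘ h.posSemidef.isHermitian.eigenvalues) *
      (star h.posSemidef.isHermitian.eigenvectorUnitary : Matrix n n ℝ))⁻¹ else 0

variable {p q : ℕ}

/-- Mean vector `μ_X` of the first component under `P`. -/
def meanX (P : Measure ((Fin p → ℝ) × (Fin q → ℝ))) : Fin p → ℝ :=
  fun i => ∫ o, o.1 i ∂P

/-- Mean vector `μ_Y` of the second component under `P`. -/
def meanY (P : Measure ((Fin p → ℝ) × (Fin q → ℝ))) : Fin q → ℝ :=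
  fun j => ∫ o, o.2 j ∂P

/-- Covariance matrix `Σ_X` of the first component under `P`, defined entrywise. -/
def covX (P : Measure ((Fin p → ℝ) × (Fin q → ℝ))) : Matrix (Fin p) (Fin p) ℝ :=
  Matrix.of fun i i' => ∫ o, (o.1 i - meanX P i) * (o.1 i' - meanX P i') ∂P

/-- Covariance matrix `Σ_Y` of the second component under `P`, defined entrywise. -/
def covY (P : Measure ((Fin p → ℝ) × (Fin q → ℝ))) : Matrix (Fin q) (Fin q) ℝ :=
  Matrix.of fun j j' => ∫ o, (o.2 j - meanY P j) * (o.2 j' - meanY P j') ∂P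

/-- Cross-covariance matrix `Σ_XY` under `P`, defined entrywise. -/
def covXY (P : Measure ((Fin p → ℝ) × (Fin q → ℝ))) : Matrix (Fin p) (Fin q) ℝ :=
  Matrix.of fun i j => ∫ o, (o.1 i - meanX P i) * (o.2 j - meanY P j) ∂P

/-- The Pillai trace `Φ(P) = tr (Σ_X⁻¹ Σ_XY Σ_Y⁻¹ Σ_YX)` of `P`. -/
def pillai (P : Measure ((Fin p → ℝ) × (Fin q → ℝ))) : ℝ :=
  Matrix.trace ((covX P)⁻¹ * covXY P * (covY P)⁻¹ * (covXY P)ᵀ)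

/-- The Dirac contamination `P_ε = (1−ε) P + ε δ_o`. -/
def pert (P : Measure ((Fin p → ℝ) × (Fin q → ℝ))) (o : (Fin p → ℝ) × (Fin q → ℝ)) (ε : ℝ) :
    Measure ((Fin p → ℝ) × (Fin q → ℝ)) :=
  ENNReal.ofReal (1 - ε) • P + ENNReal.ofReal ε • Measure.dirac o


/-!
Whitening by `S_X = Σ_X^{-1/2}` and `S_Y = Σ_Y^{-1/2}` writes the three quadratic forms as
`S_X (Λ Λᵀ) S_X`, `S_Y (Λᵀ Λ) S_Y` and `S_Y Λᵀ S_X`, so with `a = ‖x - μ_X‖ ‖S_X‖` and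
`b = ‖y - μ_Y‖ ‖S_Y‖` the bracket is at most `‖Λ‖² (a² + b²) + 2 ‖Λ‖ a b` in absolute value.
The prefactor `(2 ‖Λ‖)⁻¹` cancels one power of `‖Λ‖`; with `2ab ≤ a² + b²` this leaves the
bound `(‖Λ‖ + 1) (a² + b²) / 2`.
What remains is bounded uniformly: the cube bounds the entries of `x - μ_X` and of `Σ_XY`, and
`‖S_X‖_F² = tr Σ_X⁻¹ ≤ s_x / δ` because every diagonal entry of `Σ_X⁻¹` is at most `1 / δ`.
-/

attribute [local instance] Matrix.frobeniusNormedAddCommGroup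

section Frobenius
variable {m n : Type*} [Fintype m] [Fintype n]

lemma frobenius_norm_sq_eq_sum (M : Matrix m n ℝ) : ‖M‖ ^ 2 = ∑ i, ∑ j, M i j ^ 2 := by
  rw [frobenius_norm_def, ← Real.rpow_natCast, ← Real.rpow_mul (by positivity)]
  simp

lemma frobSq_eq_norm_sq (M : Matrix m n ℝ) : frobSq M = ‖M‖ ^ 2 := by
  rw [frobenius_norm_sq_eq_sum]
  simp [frobSq, Matrix.trace, Matrix.mul_apply, sq]

lemma frobNorm_eq_norm (M : Matrix m n ℝ) : frobNorm M = ‖M‖ := by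
  rw [frobNorm, frobSq_eq_norm_sq, Real.sqrt_sq (norm_nonneg _)]

lemma frobenius_norm_sq_le_of_abs_le {M : Matrix m n ℝ} {c : ℝ} (h : ∀ i j, |M i j| ≤ c) :
    ‖M‖ ^ 2 ≤ Fintype.card m * Fintype.card n * c ^ 2 := by
  rw [frobenius_norm_sq_eq_sum]
  calc ∑ i, ∑ j, M i j ^ 2 ≤ ∑ _i : m, ∑ _j : n, c ^ 2 := by
        refine Finset.sum_le_sum fun i _ => Finset.sum_le_sum fun j _ => ?_
        simpa using pow_le_pow_left₀ (abs_nonneg _) (h i j) 2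
    _ = _ := by simp [mul_assoc]

lemma norm_toLp_sq_le_of_abs_le {v : n → ℝ} {c : ℝ} (h : ∀ i, |v i| ≤ c) :
    ‖WithLp.toLp 2 v‖ ^ 2 ≤ Fintype.card n * c ^ 2 := by
  rw [← frobenius_norm_replicateCol (ι := Unit)]
  simpa using frobenius_norm_sq_le_of_abs_le (M := replicateCol Unit v) fun i _ => h i

lemma abs_dotProduct_mulVec_le (u : m → ℝ) (M : Matrix m n ℝ) (w : n → ℝ) :
    |u ⬝ᵥ M *ᵥ w| ≤ ‖WithLp.toLp 2 u‖ * ‖M‖ * ‖WithLp.toLp 2 w‖ := by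
  have hMw : ‖WithLp.toLp 2 (M *ᵥ w)‖ ≤ ‖M‖ * ‖WithLp.toLp 2 w‖ := by
    rw [← frobenius_norm_replicateCol (ι := Unit), ← frobenius_norm_replicateCol (ι := Unit),
      replicateCol_mulVec]
    exact frobenius_norm_mul _ _
  calc |u ⬝ᵥ M *ᵥ w|
      = |inner ℝ (WithLp.toLp 2 u : EuclideanSpace ℝ m) (WithLp.toLp 2 (M *ᵥ w))| := by
        simp [EuclideanSpace.inner_toLp_toLp, dotProduct_comm]
    _ ≤ _ := (abs_real_inner_le_norm _ _).trans (by rw [mul_assoc]; gcongr)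

variable {l r : Type*} [Fintype l] [Fintype r]

lemma frobenius_norm_mul_mul_le (K : Matrix m l ℝ) (M : Matrix l r ℝ) (L : Matrix r n ℝ) :
    ‖K * M * L‖ ≤ ‖K‖ * ‖M‖ * ‖L‖ :=
  (frobenius_norm_mul _ _).trans (by gcongr; exact frobenius_norm_mul _ _)

lemma frobenius_norm_mul_mul_le_sqrt {K : Matrix m l ℝ} {M : Matrix l r ℝ} {L : Matrix r n ℝ}
    {α β γ : ℝ} (hK : ‖K‖ ^ 2 ≤ α) (hM : ‖M‖ ^ 2 ≤ β) (hL : ‖L‖ ^ 2 ≤ γ) :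
    ‖K * M * L‖ ≤ √(α * β * γ) := by
  refine Real.le_sqrt_of_sq_le ?_
  have := (sq_nonneg ‖K‖).trans hK
  have := (sq_nonneg ‖M‖).trans hM
  calc ‖K * M * L‖ ^ 2 ≤ (‖K‖ * ‖M‖ * ‖L‖) ^ 2 := by gcongr; exact frobenius_norm_mul_mul_le K M L
    _ = ‖K‖ ^ 2 * ‖M‖ ^ 2 * ‖L‖ ^ 2 := by ring
    _ ≤ α * β * γ := by gcongr

lemma abs_dotProduct_mul_mul_mulVec_le (u : m → ℝ) (K : Matrix m l ℝ) (M : Matrix l r ℝ)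
    (L : Matrix r n ℝ) (w : n → ℝ) :
    |u ⬝ᵥ (K * M * L) *ᵥ w| ≤ ‖WithLp.toLp 2 u‖ * ‖K‖ * ‖M‖ * (‖L‖ * ‖WithLp.toLp 2 w‖) := by
  refine (abs_dotProduct_mulVec_le u _ w).trans ?_
  calc ‖WithLp.toLp 2 u‖ * ‖K * M * L‖ * ‖WithLp.toLp 2 w‖
      ≤ ‖WithLp.toLp 2 u‖ * (‖K‖ * ‖M‖ * ‖L‖) * ‖WithLp.toLp 2 w‖ := by
        gcongr; exact frobenius_norm_mul_mul_le K M L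
    _ = _ := by ring

end Frobenius

lemma abs_inv_two_mul_le {F a b p q r : ℝ} (hF : 0 ≤ F)
    (hp : |p| ≤ a ^ 2 * F ^ 2) (hq : |q| ≤ b ^ 2 * F ^ 2) (hr : |r| ≤ a * b * F) :
    |(2 * F)⁻¹ * (-p - q + 2 * r)| ≤ (F + 1) * (a ^ 2 + b ^ 2) / 2 := by
  rcases hF.eq_or_lt with rfl | hF
  · simp only [mul_zero, _root_.inv_zero, zero_mul, abs_zero]
    positivity
  have hsum : |-p - q + 2 * r| ≤ a ^ 2 * F ^ 2 + b ^ 2 * F ^ 2 + 2 * (a * b * F) := by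
    have := abs_add_three (-p) (-q) (2 * r)
    rw [abs_neg, abs_neg, abs_mul, abs_two, ← sub_eq_add_neg] at this
    linarith
  rw [abs_mul, abs_of_pos (by positivity), inv_mul_le_iff₀ (by positivity)]
  nlinarith [sq_nonneg (a - b)]

section InvSqrt
variable {n : Type*} [Fintype n]

lemma posDef_of_coercive {A : Matrix n n ℝ} (hA : A.IsHermitian) {δ : ℝ} (hδ : 0 < δ)
    (h : ∀ v : n → ℝ, δ * (v ⬝ᵥ v) ≤ v ⬝ᵥ A *ᵥ v) : A.PosDef :=
  .of_dotProduct_mulVec_pos hA fun v hv =>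
    (mul_pos hδ (dotProduct_self_star_pos_iff.mpr hv)).trans_le (h v)

variable [DecidableEq n]

lemma inv_apply_self_le_of_coercive {A : Matrix n n ℝ} (hA : IsUnit A.det) {δ : ℝ} (hδ : 0 < δ)
    (h : ∀ v : n → ℝ, δ * (v ⬝ᵥ v) ≤ v ⬝ᵥ A *ᵥ v) (j : n) : A⁻¹ j j ≤ δ⁻¹ := by
  -- `w = A⁻¹ eⱼ` has `wⱼ = A⁻¹ j j` and `δ wⱼ² ≤ δ ‖w‖² ≤ wᵀ A w = wⱼ`.
  set w := A⁻¹ *ᵥ Pi.single j 1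
  have hform : w ⬝ᵥ A *ᵥ w = w j := by
    rw [mulVec_mulVec, mul_nonsing_inv _ hA, one_mulVec, dotProduct_single, mul_one]
  have hsq : w j * w j ≤ w ⬝ᵥ w :=
    Finset.single_le_sum (f := fun i => w i * w i) (fun i _ => mul_self_nonneg _)
      (Finset.mem_univ j)
  have hwj : w j = A⁻¹ j j := by simp [w, mulVec_single]
  have hcoer := h w
  rw [← hwj]
  rcases le_or_gt (w j) 0 with hneg | hpos
  · exact hneg.trans (inv_nonneg.mpr hδ.le)
  · have hδw : δ * w j ≤ 1 := by nlinarith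
    calc w j = δ⁻¹ * (δ * w j) := by field_simp
      _ ≤ δ⁻¹ := mul_le_of_le_one_right (inv_nonneg.mpr hδ.le) hδw

lemma invSqrt_eq_inv_cfc_sqrt {A : Matrix n n ℝ} (hA : A.PosDef) :
    invSqrt A = (cfc Real.sqrt A)⁻¹ := by
  rw [invSqrt, dif_pos hA, hA.isHermitian.cfc_eq, IsHermitian.cfc, Unitary.conjStarAlgAut_apply]
  rfl

lemma cfc_sqrt_mul_self {A : Matrix n n ℝ} (hA : A.PosSemidef) :
    cfc Real.sqrt A * cfc Real.sqrt A = A := by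
  rw [← cfc_mul Real.sqrt Real.sqrt A]
  conv_rhs => rw [← cfc_id' ℝ A hA.isHermitian.isSelfAdjoint]
  refine cfc_congr fun x hx => Real.mul_self_sqrt ?_
  obtain ⟨i, rfl⟩ := hA.isHermitian.spectrum_real_eq_range_eigenvalues ▸ hx
  exact hA.eigenvalues_nonneg i

lemma transpose_cfc (f : ℝ → ℝ) (A : Matrix n n ℝ) : (cfc f A)ᵀ = cfc f A := by
  simpa [star_eq_conjTranspose] using (cfc_predicate f A).star_eq

lemma transpose_invSqrt {A : Matrix n n ℝ} (hA : A.PosDef) : (invSqrt A)ᵀ = invSqrt A := by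
  rw [invSqrt_eq_inv_cfc_sqrt hA, transpose_nonsing_inv, transpose_cfc]

lemma invSqrt_mul_self {A : Matrix n n ℝ} (hA : A.PosDef) : invSqrt A * invSqrt A = A⁻¹ := by
  rw [invSqrt_eq_inv_cfc_sqrt hA, ← Matrix.mul_inv_rev, cfc_sqrt_mul_self hA.posSemidef]

lemma norm_invSqrt_sq_le {A : Matrix n n ℝ} (hA : A.PosDef) {δ : ℝ} (hδ : 0 < δ)
    (h : ∀ v : n → ℝ, δ * (v ⬝ᵥ v) ≤ v ⬝ᵥ A *ᵥ v) :
    ‖invSqrt A‖ ^ 2 ≤ Fintype.card n * δ⁻¹ := by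
  rw [← frobSq_eq_norm_sq, frobSq, transpose_invSqrt hA, invSqrt_mul_self hA]
  calc A⁻¹.trace ≤ ∑ _j : n, δ⁻¹ :=
        Finset.sum_le_sum fun j _ => inv_apply_self_le_of_coercive hA.det_pos.ne'.isUnit hδ h j
    _ = _ := by simp

end InvSqrt

theorem abs_rootPillai_gradient_le {m n : Type*} [Fintype m] [Fintype n] {SX : Matrix m m ℝ}
    {SY : Matrix n n ℝ} (hSX : SXᵀ = SX) (hSY : SYᵀ = SY) (C : Matrix m n ℝ) (dx : m → ℝ)
    (dy : n → ℝ) :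
    |(2 * ‖SX * C * SY‖)⁻¹ *
        (-(dx ⬝ᵥ (SX * SX * C * (SY * SY) * Cᵀ * (SX * SX)) *ᵥ dx)
          - dy ⬝ᵥ (SY * SY * Cᵀ * (SX * SX) * C * (SY * SY)) *ᵥ dy
          + 2 * (dy ⬝ᵥ (SY * SY * Cᵀ * (SX * SX)) *ᵥ dx))| ≤
      (‖SX * C * SY‖ + 1) *
        ((‖WithLp.toLp 2 dx‖ * ‖SX‖) ^ 2 + (‖WithLp.toLp 2 dy‖ * ‖SY‖) ^ 2) / 2 := by
  set Λ := SX * C * SY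
  have hΛt : Λᵀ = SY * Cᵀ * SX := by simp [Λ, transpose_mul, hSX, hSY, Matrix.mul_assoc]
  have hΛΛt : ‖Λ * Λᵀ‖ ≤ ‖Λ‖ ^ 2 := by
    simpa [frobenius_norm_transpose, sq] using frobenius_norm_mul Λ Λᵀ
  have hΛtΛ : ‖Λᵀ * Λ‖ ≤ ‖Λ‖ ^ 2 := by
    simpa [frobenius_norm_transpose, sq] using frobenius_norm_mul Λᵀ Λ
  have e₁ : SX * SX * C * (SY * SY) * Cᵀ * (SX * SX) = SX * (Λ * Λᵀ) * SX := by
    rw [hΛt]; simp only [Λ, Matrix.mul_assoc]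
  have e₂ : SY * SY * Cᵀ * (SX * SX) * C * (SY * SY) = SY * (Λᵀ * Λ) * SY := by
    rw [hΛt]; simp only [Λ, Matrix.mul_assoc]
  have e₃ : SY * SY * Cᵀ * (SX * SX) = SY * Λᵀ * SX := by
    simp only [hΛt, Matrix.mul_assoc]
  rw [e₁, e₂, e₃]
  refine abs_inv_two_mul_le (norm_nonneg _) ?_ ?_ ?_
  · refine (abs_dotProduct_mul_mul_mulVec_le _ _ _ _ _).trans ?_
    calc _ ≤ ‖WithLp.toLp 2 dx‖ * ‖SX‖ * ‖Λ‖ ^ 2 * (‖SX‖ * ‖WithLp.toLp 2 dx‖) := by gcongr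
      _ = _ := by ring
  · refine (abs_dotProduct_mul_mul_mulVec_le _ _ _ _ _).trans ?_
    calc _ ≤ ‖WithLp.toLp 2 dy‖ * ‖SY‖ * ‖Λ‖ ^ 2 * (‖SY‖ * ‖WithLp.toLp 2 dy‖) := by gcongr
      _ = _ := by ring
  · refine (abs_dotProduct_mul_mul_mulVec_le _ _ _ _ _).trans_eq ?_
    rw [frobenius_norm_transpose]
    ring

lemma abs_integral_le_of_ae_abs_le {α : Type*} [MeasurableSpace α] {μ : Measure α}
    [IsProbabilityMeasure μ] {f : α → ℝ} {c : ℝ} (h : ∀ᵐ a ∂μ, |f a| ≤ c) :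
    |∫ a, f a ∂μ| ≤ c := by
  simpa using norm_integral_le_of_norm_le_const (μ := μ) (f := f) (C := c) (by simpa using h)

section Moments
variable {p q : ℕ} {P : Measure ((Fin p → ℝ) × (Fin q → ℝ))}

lemma isHermitian_covX (P : Measure ((Fin p → ℝ) × (Fin q → ℝ))) : (covX P).IsHermitian := by
  ext i i'
  simp [covX, mul_comm]

lemma isHermitian_covY (P : Measure ((Fin p → ℝ) × (Fin q → ℝ))) : (covY P).IsHermitian := by
  ext j j'
  simp [covY, mul_comm]

variable [IsProbabilityMeasure P]

lemma abs_sub_meanX_le (hP : ∀ᵐ o ∂P, ∀ i, |o.1 i| ≤ 1) {x : Fin p → ℝ}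
    (hx : ∀ i, |x i| ≤ 1) (i : Fin p) : |x i - meanX P i| ≤ 2 := by
  have : |meanX P i| ≤ 1 := abs_integral_le_of_ae_abs_le (hP.mono fun o ho => ho i)
  linarith [abs_sub (x i) (meanX P i), hx i]

lemma abs_sub_meanY_le (hP : ∀ᵐ o ∂P, ∀ j, |o.2 j| ≤ 1) {y : Fin q → ℝ}
    (hy : ∀ j, |y j| ≤ 1) (j : Fin q) : |y j - meanY P j| ≤ 2 := by
  have : |meanY P j| ≤ 1 := abs_integral_le_of_ae_abs_le (hP.mono fun o ho => ho j)
  linarith [abs_sub (y j) (meanY P j), hy j]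

lemma abs_covXY_le (hP : ∀ᵐ o ∂P, (∀ i, |o.1 i| ≤ 1) ∧ ∀ j, |o.2 j| ≤ 1) (i : Fin p)
    (j : Fin q) : |covXY P i j| ≤ 4 := by
  refine abs_integral_le_of_ae_abs_le ?_
  filter_upwards [hP] with o ho
  rw [abs_mul]
  calc _ ≤ 2 * 2 := mul_le_mul (abs_sub_meanX_le (hP.mono fun _ h => h.1) ho.1 i)
        (abs_sub_meanY_le (hP.mono fun _ h => h.2) ho.2 j) (abs_nonneg _) zero_le_two
    _ = 4 := by norm_num

end Moments

/-- Uniform boundedness of the canonical gradient of the root-Pillai trace: for any sparsity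
levels `s_x, s_y ≥ 1` and any `δ > 0` there is a constant `M` bounding the canonical gradient
uniformly over all probability measures `P` supported in `[−1,1]^{s_x} × [−1,1]^{s_y}` whose
covariance matrices have smallest eigenvalues at least `δ` and whose cross-covariance is
nonzero, and over all points `(x, y)` in the cube. -/
theorem canonical_gradient_uniformly_bounded :
    ∀ sx sy : ℕ, 0 < sx → 0 < sy → ∀ δ : ℝ, 0 < δ →
      ∃ M : ℝ, ∀ P : Measure ((Fin sx → ℝ) × (Fin sy → ℝ)), IsProbabilityMeasure P →
        (∀ᵐ o ∂P, (∀ i, |o.1 i| ≤ 1) ∧ (∀ j, |o.2 j| ≤ 1)) →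
        (∀ v : Fin sx → ℝ, δ * (v ⬝ᵥ v) ≤ v ⬝ᵥ (covX P).mulVec v) →
        (∀ v : Fin sy → ℝ, δ * (v ⬝ᵥ v) ≤ v ⬝ᵥ (covY P).mulVec v) →
        covXY P ≠ 0 →
        ∀ x : Fin sx → ℝ, ∀ y : Fin sy → ℝ, (∀ i, |x i| ≤ 1) → (∀ j, |y j| ≤ 1) →
        |(2 * frobNorm (invSqrt (covX P) * covXY P * invSqrt (covY P)))⁻¹ *
            (-((fun i => x i - meanX P i) ⬝ᵥ
                  (((covX P)⁻¹ * covXY P * (covY P)⁻¹ * (covXY P)ᵀ * (covX P)⁻¹).mulVec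
                    (fun i => x i - meanX P i)))
              - ((fun j => y j - meanY P j) ⬝ᵥ
                  (((covY P)⁻¹ * (covXY P)ᵀ * (covX P)⁻¹ * covXY P * (covY P)⁻¹).mulVec
                    (fun j => y j - meanY P j)))
              + 2 * ((fun j => y j - meanY P j) ⬝ᵥ
                  (((covY P)⁻¹ * (covXY P)ᵀ * (covX P)⁻¹).mulVec
                    (fun i => x i - meanX P i))))| ≤ M := by
  intro sx sy _ _ δ hδ
  refine ⟨(√(sx * δ⁻¹ * (sx * sy * 4 ^ 2) * (sy * δ⁻¹)) + 1) *
    (sx * 2 ^ 2 * (sx * δ⁻¹) + sy * 2 ^ 2 * (sy * δ⁻¹)) / 2, ?_⟩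
  intro P _ hP hX hY _ x y hx hy
  have hA := posDef_of_coercive (isHermitian_covX P) hδ hX
  have hB := posDef_of_coercive (isHermitian_covY P) hδ hY
  have hSX := norm_invSqrt_sq_le hA hδ hX
  have hSY := norm_invSqrt_sq_le hB hδ hY
  have hC := frobenius_norm_sq_le_of_abs_le (abs_covXY_le hP)
  have hdx := norm_toLp_sq_le_of_abs_le (abs_sub_meanX_le (hP.mono fun _ h => h.1) hx)
  have hdy := norm_toLp_sq_le_of_abs_le (abs_sub_meanY_le (hP.mono fun _ h => h.2) hy)
  simp only [Fintype.card_fin] at hSX hSY hC hdx hdy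
  rw [← invSqrt_mul_self hA, ← invSqrt_mul_self hB, frobNorm_eq_norm]
  refine (abs_rootPillai_gradient_le (transpose_invSqrt hA) (transpose_invSqrt hB) _ _ _).trans ?_
  gcongr
  · exact frobenius_norm_mul_mul_le_sqrt hSX hC hSY
  · rw [mul_pow]; exact mul_le_mul hdx hSX (sq_nonneg _) (by positivity)
  · rw [mul_pow]; exact mul_le_mul hdy hSY (sq_nonneg _) (by positivity)
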